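/- arXiv:2004.07243 — 3 statements merged into one kernel-verified Lean document; each statement's English description precedes it below -/
import Mathlib

section
/- Let N be even and label the qubits 1,…,N. Let P be a Pauli string that commutes with Z i for every 1 ≤ i ≤ N and commutes with g i = X(i−1) Z i X(i+1) for every 2 ≤ i ≤ N−1. Then P = c • G1^{a} G2^{b} for some c ∈ {1, −1, i, −i} and a, b ∈ {0,1}, where G1 = ∏_{i even} Z i and G2 = ∏_{i odd} Z i. -/
open scoped Classical
open scoped Matrix
noncomputable section
namespace QStab

/-- The space of operators (matrices) on a chain of qubits indexed by `ι`. -/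
abbrev Op (ι : Type*) [Fintype ι] [DecidableEq ι] : Type _ :=
  Matrix (ι → Fin 2) (ι → Fin 2) ℂ

variable {ι : Type*} [Fintype ι] [DecidableEq ι]

/-- The Pauli `X` operator at site `i`. -/
def PX (i : ι) : Op ι :=
  Matrix.of fun f g => if f = Function.update g i (g i + 1) then 1 else 0

/-- The Pauli `Z` operator at site `i`. -/
def PZ (i : ι) : Op ι :=
  Matrix.of fun f g => if f = g then ((-1 : ℂ)) ^ ((f i : ℕ)) else 0

/-- The (ordered) product `∏ i, (X i)^(a i)`. -/
def XProd (a : ι → Fin 2) : Op ι :=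
  (Finset.univ.toList.map fun i => PX i ^ ((a i : ℕ))).prod

/-- The (ordered) product `∏ i, (Z i)^(b i)`. -/
def ZProd (b : ι → Fin 2) : Op ι :=
  (Finset.univ.toList.map fun i => PZ i ^ ((b i : ℕ))).prod

/-- `c` is one of the allowed phases `1, −1, i, −i` of a Pauli string. -/
def IsPhase (c : ℂ) : Prop := c = 1 ∨ c = -1 ∨ c = Complex.I ∨ c = -Complex.I

/-- `M` is a Pauli string: `M = c • (∏ i, (X i)^(a i)) * (∏ i, (Z i)^(b i))`. -/
def IsPauli (M : Op ι) : Prop :=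
  ∃ (c : ℂ) (a b : ι → Fin 2), IsPhase c ∧ M = c • (XProd a * ZProd b)

/-- `M` is a Pauli string acting as the identity on every site outside `A`. -/
def IsPauliSupportedOn (A : Finset ι) (M : Op ι) : Prop :=
  ∃ (c : ℂ) (a b : ι → Fin 2), IsPhase c ∧ (∀ i, i ∉ A → a i = 0 ∧ b i = 0) ∧
    M = c • (XProd a * ZProd b)

/-- `M` is a Pauli string acting trivially (as the identity) at the site `i`. -/
def ActsTriviallyAt (i : ι) (M : Op ι) : Prop :=
  ∃ (c : ℂ) (a b : ι → Fin 2), IsPhase c ∧ a i = 0 ∧ b i = 0 ∧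
    M = c • (XProd a * ZProd b)

/-- The function on all of `ι` agreeing with `f` on `A` and with `h` on `Aᶜ`. -/
def combine (A : Finset ι) (f : ↥A → Fin 2) (h : ↥(Aᶜ) → Fin 2) : ι → Fin 2 :=
  fun i => if hi : i ∈ A then f ⟨i, hi⟩ else h ⟨i, Finset.mem_compl.mpr hi⟩

/-- The partial trace over the qubits outside `A` (the reduced density matrix on `A`). -/
def ptrace (A : Finset ι) (ρ : Op ι) : Matrix (↥A → Fin 2) (↥A → Fin 2) ℂ :=
  Matrix.of fun f g => ∑ h : ↥(Aᶜ) → Fin 2, ρ (combine A f h) (combine A g h)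

/-- The rank-one projector `|ψ⟩⟨ψ|`. -/
def outer (ψ : (ι → Fin 2) → ℂ) : Op ι :=
  Matrix.of fun f g => ψ f * star (ψ g)

/-- `ψ` is a unit vector. -/
def IsUnitVec (ψ : (ι → Fin 2) → ℂ) : Prop :=
  ∑ f, Complex.normSq (ψ f) = 1

/-- The von Neumann entropy `−Tr(ρ log ρ)` of a Hermitian matrix, computed through its
eigenvalues (with the convention `0 log 0 = 0`, and junk value `0` on non-Hermitian input). -/
def vnEntropy {n : Type*} [Fintype n] [DecidableEq n] (ρ : Matrix n n ℂ) : ℝ :=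
  if h : ρ.IsHermitian then -∑ i, (h.eigenvalues i * Real.log (h.eigenvalues i)) else 0

/-- The von Neumann entanglement entropy of `ψ` in the region `A`:
`S_A(ψ) = −Tr(ρ_A log ρ_A)` where `ρ_A` is the reduced density matrix of `|ψ⟩⟨ψ|`. -/
def entEntropy (A : Finset ι) (ψ : (ι → Fin 2) → ℂ) : ℝ :=
  vnEntropy (ptrace A (outer ψ))

/-- The product of the `s i` over the subset `T` (in increasing order of indices). -/
def subProd {N : ℕ} (s : Fin N → Op ι) (T : Finset (Fin N)) : Op ι :=
  ((Finset.sort T (· ≤ ·)).map s).prod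

/-- `{s 0, …, s (N-1)}` is an independent set of `N` Hermitian pairwise commuting Pauli
strings: products over distinct subsets are pairwise distinct and no nonempty product
equals `±I`. -/
def IndepStabs {N : ℕ} (s : Fin N → Op ι) : Prop :=
  (∀ i, IsPauli (s i)) ∧ (∀ i, (s i).IsHermitian) ∧
  (∀ i j, Commute (s i) (s j)) ∧
  Function.Injective (subProd s) ∧
  (∀ T : Finset (Fin N), T.Nonempty → subProd s T ≠ 1 ∧ subProd s T ≠ -1)

/-- The 1-based label of the site `i : Fin N`, so that the qubits are labeled `1, …, N`. -/
def lbl {N : ℕ} (i : Fin N) : ℕ := (i : ℕ) + 1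

/-- The single-qubit operator `Z p` at the site with label `p` (1-based). -/
def ZSingle (N : ℕ) (p : ℕ) : Op (Fin N) :=
  ZProd fun i => if lbl i = p then 1 else 0

/-- The string of `Z`'s at the labels `p, p+2, …, q` (sites of the parity of `p` in `[p,q]`). -/
def ZStr (N : ℕ) (p q : ℕ) : Op (Fin N) :=
  ZProd fun i => if p ≤ lbl i ∧ lbl i ≤ q ∧ lbl i % 2 = p % 2 then 1 else 0

/-- The string operator `g_{p,q} = X p * (∏_{k=0}^{(q−p)/2−1} Z (p+2k+1)) * X q`
for labels `p < q` of the same parity.  In particular the cluster stabilizer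
`g i = X (i−1) * Z i * X (i+1)` is `GStr N (i-1) (i+1)`. -/
def GStr (N : ℕ) (p q : ℕ) : Op (Fin N) :=
  (XProd fun i => if lbl i = p ∨ lbl i = q then 1 else 0) *
    ZProd fun i => if p < lbl i ∧ lbl i < q ∧ ¬(lbl i % 2 = p % 2) then 1 else 0

/-- `G1 = ∏_{i even} Z i` (even labels). -/
def Gsym1 (N : ℕ) : Op (Fin N) := ZProd fun i => if lbl i % 2 = 0 then 1 else 0

/-- `G2 = ∏_{i odd} Z i` (odd labels). -/
def Gsym2 (N : ℕ) : Op (Fin N) := ZProd fun i => if lbl i % 2 = 1 then 1 else 0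

/-- The measurement channel `𝓔_S(ρ) = Π₊ ρ Π₊ + Π₋ ρ Π₋` with `Π± = (I ± S)/2`. -/
def measChannel (S ρ : Op ι) : Op ι :=
  ((2 : ℂ)⁻¹ • (1 + S)) * ρ * ((2 : ℂ)⁻¹ • (1 + S)) +
    ((2 : ℂ)⁻¹ • (1 - S)) * ρ * ((2 : ℂ)⁻¹ • (1 - S))

/-- Measurement-update map on stabilizer groups: if the measured Pauli `M` commutes with
every element of `G` the group is unchanged; otherwise the new group is generated by the
centralizer `C_G(M)` together with `ε • M` (where `ε` is the measurement outcome sign). -/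
def Meas (G : Submonoid (Op ι)) (M : Op ι) (ε : ℂ) : Submonoid (Op ι) :=
  if ∀ g ∈ G, M * g = g * M then G
  else Submonoid.closure ({g | g ∈ G ∧ M * g = g * M} ∪ {ε • M})

/-- The isolated-SPT stabilizer set `𝒮(A)`: the string operators `g_{q_i, q_{i+1}}` between
consecutive elements of `A`, together with the total `Z`-product `∏_{p ∈ A} Z p`. -/
def SPTstabs (N : ℕ) (A : Finset ℕ) : Set (Op (Fin N)) :=
  {m | (∃ p ∈ A, ∃ q ∈ A, p < q ∧ (∀ r ∈ A, ¬(p < r ∧ r < q)) ∧ m = GStr N p q) ∨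
    m = ZProd fun i => if lbl i ∈ A then 1 else 0}

/-- The block of the partition `P` containing `x`. -/
def blockOf (P : Finset (Finset ℕ)) (x : ℕ) : Finset ℕ :=
  P.sup fun A => if x ∈ A then A else ∅

/-- Partition update for the move “measure `Z i`”: `i` is split off into its own block. -/
def updZ (P : Finset (Finset ℕ)) (i : ℕ) : Finset (Finset ℕ) :=
  insert {i} ((P.image fun A => A.erase i).erase ∅)

/-- Partition update for the move “measure `g i`”: the blocks of `i−1` and `i+1` merge. -/
def updG (P : Finset (Finset ℕ)) (i : ℕ) : Finset (Finset ℕ) :=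
  insert (blockOf P (i - 1) ∪ blockOf P (i + 1))
    ((P.erase (blockOf P (i - 1))).erase (blockOf P (i + 1)))

/-- The partition of `{1, …, N}` into singletons. -/
def startPart (N : ℕ) : Finset (Finset ℕ) := (Finset.Icc 1 N).image fun i => {i}

/-- The matrix `M`, supported on `A`, viewed as an operator on the qubits in `A` only. -/
def restrictOp (A : Finset ι) (M : Op ι) : Matrix (↥A → Fin 2) (↥A → Fin 2) ℂ :=
  Matrix.of fun f g =>
    M (fun i => if hi : i ∈ A then f ⟨i, hi⟩ else 0)
      (fun i => if hi : i ∈ A then g ⟨i, hi⟩ else 0)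

/-! Writing `P = c • X^a Z^b`, the relation `Z^b X^a = (-1)^(b ⬝ a) X^a Z^b` shows that two
Pauli strings commute iff the symplectic form `b ⬝ a' + b' ⬝ a` vanishes in `ZMod 2`.
Commuting with every `Z i` forces `a = 0`; commuting with `X(i-1) Z i X(i+1)` then says
`b (i-1) = b (i+1)`, so `b` is constant on the even and on the odd sites, i.e.
`Z^b = G1^β G2^α`. -/

lemma addChar_map_list_sum {A M α : Type*} [AddMonoid A] [Monoid M] (ψ : AddChar A M)
    (l : List α) (v : α → A) : (l.map fun x => ψ (v x)).prod = ψ (l.map v).sum := by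
  induction l with
  | nil => simp
  | cons x l ih => simp [ih, ψ.map_add_eq_mul]

lemma addChar_map_sum {A M κ : Type*} [AddCommMonoid A] [CommMonoid M] (ψ : AddChar A M)
    (s : Finset κ) (x : κ → A) : ψ (∑ k ∈ s, x k) = ∏ k ∈ s, ψ (x k) := by
  induction s using Finset.induction_on with
  | empty => simp
  | insert k s hk ih => rw [Finset.sum_insert hk, Finset.prod_insert hk, ψ.map_add_eq_mul, ih]

lemma list_prod_map_diagonal {α n R : Type*} [Fintype n] [DecidableEq n] [CommSemiring R]
    (l : List α) (d : α → n → R) :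
    (l.map fun x => Matrix.diagonal (d x)).prod = Matrix.diagonal (l.map d).prod := by
  induction l with
  | nil => simp
  | cons x l ih => simp [ih]

lemma exists_eq_ite_mod_two {α : Type*} [Inhabited α] {N : ℕ} (b : Fin N → α)
    (h : ∀ j (hj : j + 2 < N), b ⟨j, by omega⟩ = b ⟨j + 2, hj⟩) :
    ∃ x y : α, ∀ k : Fin N, b k = if (k : ℕ) % 2 = 0 then x else y := by
  refine ⟨if h0 : 0 < N then b ⟨0, h0⟩ else default,
    if h1 : 1 < N then b ⟨1, h1⟩ else default, ?_⟩
  rintro ⟨k, hk⟩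
  induction k using Nat.strong_induction_on with
  | _ k ih =>
    rcases Nat.lt_or_ge k 2 with hk2 | hk2
    · interval_cases k <;> simp [hk]
    · obtain ⟨j, rfl⟩ := Nat.exists_eq_add_of_le' hk2
      rw [← h j hk, ih j (by omega), Nat.add_mod_right]

lemma fin_two_add_eq_zero_iff (x y : Fin 2) : x + y = 0 ↔ x = y := by
  revert x y
  decide

def signChar : AddChar (Fin 2) ℂ where
  toFun x := (-1) ^ (x : ℕ)
  map_zero_eq_one' := pow_zero _
  map_add_eq_mul' x y := by fin_cases x <;> fin_cases y <;> simp

lemma signChar_mul (x y : Fin 2) : signChar (x * y) = signChar y ^ (x : ℕ) := by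
  fin_cases x <;> simp

lemma signChar_injective : Function.Injective signChar := by
  intro x y h
  fin_cases x <;> fin_cases y <;> first | rfl | norm_num [signChar] at h

def bitFlip : AddChar (ι → Fin 2) (Op ι) where
  toFun v := Matrix.of fun f g => if f = g + v then 1 else 0
  map_zero_eq_one' := by ext f g; simp [Matrix.one_apply]
  map_add_eq_mul' v w := by
    ext f g
    simp only [Matrix.of_apply, Matrix.mul_apply, mul_ite, mul_one, mul_zero]
    rw [Finset.sum_ite_eq']
    simp [add_assoc, add_comm w v]

lemma bitFlip_apply (v f g : ι → Fin 2) : bitFlip v f g = if f = g + v then 1 else 0 := rfl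

lemma px_eq_bitFlip (i : ι) : PX i = bitFlip (Pi.single i 1) := by
  ext f g
  rw [PX, Matrix.of_apply, bitFlip_apply]
  congr 2
  funext k
  by_cases hk : k = i
  · subst hk; simp
  · simp [hk]

lemma xprod_eq_bitFlip (a : ι → Fin 2) : XProd a = bitFlip a := by
  have hpow (i : ι) : PX i ^ (a i : ℕ) = bitFlip (Pi.single i (a i)) := by
    rw [px_eq_bitFlip]
    generalize a i = x
    fin_cases x <;> simp
  simp_rw [XProd, hpow, addChar_map_list_sum, Finset.sum_map_toList, Finset.univ_sum_single]

lemma pz_eq_diagonal (i : ι) : PZ i = Matrix.diagonal fun f => signChar (f i) := by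
  ext f g
  simp [PZ, Matrix.diagonal_apply, signChar]

lemma zprod_eq_diagonal (b : ι → Fin 2) :
    ZProd b = Matrix.diagonal fun f => signChar (b ⬝ᵥ f) := by
  have hpow (i : ι) : PZ i ^ (b i : ℕ) = Matrix.diagonal fun f => signChar (b i * f i) := by
    simp only [pz_eq_diagonal, Matrix.diagonal_pow, signChar_mul]
    rfl
  simp_rw [ZProd, hpow, list_prod_map_diagonal, Finset.prod_map_toList]
  congr 1
  funext f
  rw [Finset.prod_apply, dotProduct, addChar_map_sum]

lemma xprod_zero : XProd (0 : ι → Fin 2) = 1 := by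
  rw [xprod_eq_bitFlip, AddChar.map_zero_eq_one]

lemma xprod_add (a a' : ι → Fin 2) : XProd (a + a') = XProd a * XProd a' := by
  simp only [xprod_eq_bitFlip, AddChar.map_add_eq_mul]

lemma zprod_zero : ZProd (0 : ι → Fin 2) = 1 := by
  simp [zprod_eq_diagonal]

lemma zprod_add (b b' : ι → Fin 2) : ZProd (b + b') = ZProd b * ZProd b' := by
  simp only [zprod_eq_diagonal, Matrix.diagonal_mul_diagonal, add_dotProduct,
    AddChar.map_add_eq_mul]

lemma zprod_pow_val (x : Fin 2) (b : ι → Fin 2) : ZProd b ^ (x : ℕ) = ZProd fun k => x * b k := by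
  fin_cases x <;> simp [zprod_zero, ← Pi.zero_def]

lemma pz_eq_zprod (i : ι) : PZ i = ZProd (Pi.single i 1) := by
  simp [pz_eq_diagonal, zprod_eq_diagonal, single_dotProduct]

lemma zprod_mul_xprod (a b : ι → Fin 2) :
    ZProd b * XProd a = signChar (b ⬝ᵥ a) • (XProd a * ZProd b) := by
  ext f g
  simp only [zprod_eq_diagonal, xprod_eq_bitFlip, Matrix.diagonal_mul, Matrix.mul_diagonal,
    bitFlip_apply, Matrix.smul_apply, smul_eq_mul]
  split_ifs with h
  · rw [h, dotProduct_add, AddChar.map_add_eq_mul]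
    ring
  · simp

lemma pauli_mul_pauli (a b a' b' : ι → Fin 2) :
    XProd a * ZProd b * (XProd a' * ZProd b') =
      signChar (b ⬝ᵥ a') • (XProd (a + a') * ZProd (b + b')) := by
  rw [xprod_add, zprod_add]
  calc XProd a * ZProd b * (XProd a' * ZProd b')
      = XProd a * (ZProd b * XProd a') * ZProd b' := by simp only [mul_assoc]
    _ = _ := by rw [zprod_mul_xprod]; simp only [mul_smul_comm, smul_mul_assoc, mul_assoc]

lemma pauli_ne_zero (a b : ι → Fin 2) : XProd a * ZProd b ≠ 0 := by
  intro h
  have := congr_fun₂ h a 0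
  simp [xprod_eq_bitFlip, zprod_eq_diagonal, Matrix.mul_diagonal, bitFlip_apply] at this

lemma commute_pauli_iff (a b a' b' : ι → Fin 2) :
    Commute (XProd a * ZProd b) (XProd a' * ZProd b') ↔ b ⬝ᵥ a' = b' ⬝ᵥ a := by
  rw [Commute, SemiconjBy, pauli_mul_pauli, pauli_mul_pauli, add_comm a', add_comm b',
    (smul_left_injective ℂ (pauli_ne_zero _ _)).eq_iff, signChar_injective.eq_iff]

lemma commute_pauli_pz_iff (a b : ι → Fin 2) (i : ι) :
    Commute (XProd a * ZProd b) (PZ i) ↔ a i = 0 := by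
  rw [pz_eq_zprod, ← one_mul (ZProd (Pi.single i 1)), ← xprod_zero, commute_pauli_iff]
  simp [single_dotProduct, eq_comm]

lemma IsPhase.ne_zero {c : ℂ} (hc : IsPhase c) : c ≠ 0 := by
  rcases hc with rfl | rfl | rfl | rfl <;> simp

lemma gStr_eq_pauli {N j : ℕ} (hj : j + 2 < N) :
    GStr N (j + 1) (j + 3) =
      XProd (Pi.single ⟨j, by omega⟩ 1 + Pi.single ⟨j + 2, hj⟩ 1) *
        ZProd (Pi.single ⟨j + 1, by omega⟩ 1) := by
  rw [GStr]
  congr 2 <;> funext k <;> simp only [lbl, Pi.add_apply, Pi.single_apply, Fin.ext_iff (a := k)]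
  · by_cases h1 : (k : ℕ) = j <;> by_cases h2 : (k : ℕ) = j + 2 <;> simp [h1, h2]
  · by_cases h : (k : ℕ) = j + 1 <;> simp [h] <;> omega

lemma commute_zprod_gStr_iff {N j : ℕ} (hj : j + 2 < N) (b : Fin N → Fin 2) :
    Commute (ZProd b) (GStr N (j + 1) (j + 3)) ↔ b ⟨j, by omega⟩ = b ⟨j + 2, hj⟩ := by
  rw [gStr_eq_pauli hj, ← one_mul (ZProd b), ← xprod_zero, commute_pauli_iff]
  simp [dotProduct_add, dotProduct_single, fin_two_add_eq_zero_iff]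

lemma zprod_ite_mod_two {N : ℕ} (x y : Fin 2) :
    ZProd (fun k : Fin N => if (k : ℕ) % 2 = 0 then x else y) =
      Gsym1 N ^ (y : ℕ) * Gsym2 N ^ (x : ℕ) := by
  rw [Gsym1, Gsym2, zprod_pow_val, zprod_pow_val, ← zprod_add]
  congr 1
  funext k
  rcases Nat.mod_two_eq_zero_or_one k with h | h <;>
    simp [lbl, h, Nat.succ_mod_two_eq_zero_iff, Nat.succ_mod_two_eq_one_iff]

theorem pauli_commuting_with_all_measurements_is_symmetry_general {N : ℕ}
    (P : Op (Fin N)) (hP : IsPauli P)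
    (hZ : ∀ i : Fin N, Commute P (PZ i))
    (hg : ∀ i : ℕ, 2 ≤ i → i ≤ N - 1 → Commute P (GStr N (i - 1) (i + 1))) :
    ∃ (c : ℂ) (a b : ℕ), IsPhase c ∧ a ≤ 1 ∧ b ≤ 1 ∧
      P = c • ((Gsym1 N) ^ a * (Gsym2 N) ^ b) := by
  obtain ⟨c, a, b, hc, rfl⟩ := hP
  simp only [Commute.smul_left_iff₀ hc.ne_zero] at hZ hg
  obtain rfl : a = 0 := funext fun i => (commute_pauli_pz_iff a b i).1 (hZ i)
  rw [xprod_zero, one_mul] at hg ⊢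
  have hb (j : ℕ) (hj : j + 2 < N) : b ⟨j, by omega⟩ = b ⟨j + 2, hj⟩ :=
    (commute_zprod_gStr_iff hj b).1 (hg (j + 2) (by omega) (by omega))
  obtain ⟨x, y, hxy⟩ := exists_eq_ite_mod_two b hb
  refine ⟨c, y, x, hc, y.is_le, x.is_le, ?_⟩
  rw [← zprod_ite_mod_two, ← funext hxy]

/-- (`N` even, qubits labeled `1, …, N`.)  If a Pauli string `P` commutes
with `Z i` for every `1 ≤ i ≤ N` and with the cluster stabilizer
`g i = X (i−1) Z i X (i+1)` for every `2 ≤ i ≤ N−1`, then `P = c • G1^a * G2^b` for some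
phase `c ∈ {1, −1, i, −i}` and `a, b ∈ {0, 1}`, where `G1 = ∏_{i even} Z i` and
`G2 = ∏_{i odd} Z i`. -/
theorem pauli_commuting_with_all_measurements_is_symmetry {N : ℕ} (hN : Even N)
    (P : Op (Fin N)) (hP : IsPauli P)
    (hZ : ∀ i : Fin N, Commute P (PZ i))
    (hg : ∀ i : ℕ, 2 ≤ i → i ≤ N - 1 → Commute P (GStr N (i - 1) (i + 1))) :
    ∃ (c : ℂ) (a b : ℕ), IsPhase c ∧ a ≤ 1 ∧ b ≤ 1 ∧
      P = c • ((Gsym1 N) ^ a * (Gsym2 N) ^ b) :=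
  pauli_commuting_with_all_measurements_is_symmetry_general P hP hZ hg

end QStab
end
end

section
/- Let ψ be a unit vector on N qubits, let G be a group of Hermitian Pauli strings with g ψ = ψ for every g ∈ G, and let M be a Hermitian Pauli string that anticommutes with at least one element of G. Then ‖Π₊ ψ‖² = 1/2, where Π₊ = (I + M)/2, and the unit vector φ = √2 · Π₊ ψ satisfies M φ = φ and h φ = φ for every h ∈ C_G(M) = {g ∈ G : M g = g M}. -/
open scoped Classical
open scoped Matrix
noncomputable section
namespace QStab

variable {ι : Type*} [Fintype ι] [DecidableEq ι]

/-!
If `g ψ = ψ` with `g` Hermitian and `M g = -g M`, then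
`⟨ψ, M ψ⟩ = ⟨g ψ, M g ψ⟩ = -⟨ψ, M ψ⟩`, so `⟨ψ, M ψ⟩ = 0`. A Hermitian Pauli string is a
Hermitian unitary, so `M * M = 1` and `Π₊ = (1 + M)/2` is an orthogonal projection with
`M Π₊ = Π₊`; hence `‖Π₊ ψ‖² = ⟨ψ, Π₊ ψ⟩ = (1 + ⟨ψ, M ψ⟩)/2 = 1/2`. An `h` commuting with `M`
commutes with `Π₊`, so it fixes `Π₊ ψ` as soon as it fixes `ψ`.
-/

lemma fin_two_add_one_add_one (x : Fin 2) : x + 1 + 1 = x := by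
  fin_cases x <;> rfl

lemma eq_update_add_one_comm {ι : Type*} [DecidableEq ι] {i : ι} {f g : ι → Fin 2}
    (h : f = Function.update g i (g i + 1)) : g = Function.update f i (f i + 1) := by
  rw [h, Function.update_self, Function.update_idem, fin_two_add_one_add_one,
    Function.update_eq_self]

section Pauli

variable {ι : Type*} [Fintype ι] [DecidableEq ι]

lemma PX_mul_self (i : ι) : PX i * PX i = (1 : Op ι) := by
  ext f g
  rw [Matrix.mul_apply, Finset.sum_eq_single (Function.update g i (g i + 1))]
  · simp only [PX, Matrix.of_apply]
    rw [Function.update_self, Function.update_idem, fin_two_add_one_add_one,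
      Function.update_eq_self]
    simp [Matrix.one_apply]
  · intro h _ hne
    simp [PX, hne]
  · simp

lemma isSelfAdjoint_PX (i : ι) : IsSelfAdjoint (PX i) := by
  ext f g
  simp only [Matrix.star_apply, PX, Matrix.of_apply]
  by_cases h : f = Function.update g i (g i + 1)
  · rw [if_pos h, if_pos (eq_update_add_one_comm h), star_one]
  · rw [if_neg h, if_neg (fun hg => h (eq_update_add_one_comm hg)), star_zero]

lemma PZ_mul_self (i : ι) : PZ i * PZ i = (1 : Op ι) := by
  ext f g
  simp only [PZ, Matrix.mul_apply, Matrix.of_apply, ite_mul, zero_mul,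
    Finset.sum_ite_eq, Finset.mem_univ, if_true, Matrix.one_apply]
  split_ifs with h
  · rw [← pow_add, ← two_mul, pow_mul]
    norm_num
  · simp

lemma isSelfAdjoint_PZ (i : ι) : IsSelfAdjoint (PZ i) := by
  ext f g
  simp only [Matrix.star_apply, PZ, Matrix.of_apply]
  by_cases h : f = g
  · subst h; simp
  · rw [if_neg h, if_neg (Ne.symm h), star_zero]

lemma mem_unitary_of_isSelfAdjoint_of_mul_self {R : Type*} [Monoid R] [StarMul R] {u : R}
    (hu : IsSelfAdjoint u) (h : u * u = 1) : u ∈ unitary R := by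
  rw [Unitary.mem_iff, hu.star_eq]
  exact ⟨h, h⟩

lemma XProd_mem_unitary (a : ι → Fin 2) : XProd a ∈ unitary (Op ι) :=
  Submonoid.list_prod_mem _ fun _ hx => by
    obtain ⟨i, -, rfl⟩ := List.mem_map.mp hx
    exact pow_mem (mem_unitary_of_isSelfAdjoint_of_mul_self (isSelfAdjoint_PX i)
      (PX_mul_self i)) _

lemma ZProd_mem_unitary (b : ι → Fin 2) : ZProd b ∈ unitary (Op ι) :=
  Submonoid.list_prod_mem _ fun _ hx => by
    obtain ⟨i, -, rfl⟩ := List.mem_map.mp hx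
    exact pow_mem (mem_unitary_of_isSelfAdjoint_of_mul_self (isSelfAdjoint_PZ i)
      (PZ_mul_self i)) _

lemma IsPhase.mem_unitary {c : ℂ} (hc : IsPhase c) : c ∈ unitary ℂ := by
  rw [Unitary.mem_iff]
  rcases hc with rfl | rfl | rfl | rfl <;> simp [Complex.conj_I]

lemma IsPauli.mem_unitary {M : Op ι} (hM : IsPauli M) : M ∈ unitary (Op ι) := by
  obtain ⟨c, a, b, hc, rfl⟩ := hM
  exact Unitary.smul_mem_of_mem hc.mem_unitary
    (mul_mem (XProd_mem_unitary a) (ZProd_mem_unitary b))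

lemma IsPauli.mul_self_of_isHermitian {M : Op ι} (hM : IsPauli M) (hMh : M.IsHermitian) :
    M * M = 1 := by
  nth_rewrite 1 [← hMh]
  exact Unitary.star_mul_self_of_mem hM.mem_unitary

end Pauli

section Projection

variable {n 𝕜 : Type*} [Field 𝕜]

lemma dotProduct_mulVec_eq_zero_of_anticommute [Fintype n] [CharZero 𝕜] [StarRing 𝕜]
    {M g : Matrix n n 𝕜} {ψ : n → 𝕜}
    (hg : g.IsHermitian) (hgψ : g *ᵥ ψ = ψ) (hanti : M * g = -(g * M)) :
    star ψ ⬝ᵥ (M *ᵥ ψ) = 0 := by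
  have hψg : star ψ ᵥ* g = star ψ := by
    rw [← hg.eq, ← Matrix.star_mulVec, hgψ]
  have hneg : star ψ ⬝ᵥ (M *ᵥ ψ) = -(star ψ ⬝ᵥ (M *ᵥ ψ)) := by
    nth_rewrite 2 [← hgψ]
    rw [Matrix.mulVec_mulVec, hanti, Matrix.neg_mulVec, dotProduct_neg,
      ← Matrix.mulVec_mulVec, Matrix.dotProduct_mulVec, hψg]
  have htwo : (2 : 𝕜) * (star ψ ⬝ᵥ (M *ᵥ ψ)) = 0 := by linear_combination hneg
  exact (mul_eq_zero.mp htwo).resolve_left two_ne_zero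

variable [DecidableEq n] {M : Matrix n n 𝕜}

/-- The paper's `Π₊`, the projector onto the `+1` eigenspace when `M * M = 1`. -/
abbrev projPlus (M : Matrix n n 𝕜) : Matrix n n 𝕜 := (2 : 𝕜)⁻¹ • (1 + M)

lemma mul_projPlus [Fintype n] (hM : M * M = 1) : M * projPlus M = projPlus M := by
  rw [Matrix.mul_smul, mul_add, mul_one, hM, add_comm]

lemma isIdempotentElem_projPlus [Fintype n] [CharZero 𝕜] (hM : M * M = 1) :
    IsIdempotentElem (projPlus M) := by
  have hsq : (1 + M) * (1 + M) = (2 : 𝕜) • (1 + M) := by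
    rw [add_mul, one_mul, mul_add, mul_one, hM, two_smul]
    abel
  rw [IsIdempotentElem, Matrix.smul_mul, Matrix.mul_smul, hsq, smul_smul, smul_smul]
  norm_num

lemma isHermitian_projPlus [StarRing 𝕜] (hM : M.IsHermitian) : (projPlus M).IsHermitian := by
  rw [Matrix.IsHermitian, Matrix.conjTranspose_smul, Matrix.conjTranspose_add,
    Matrix.conjTranspose_one, hM.eq, star_inv₀, star_ofNat]

lemma commute_projPlus_left [Fintype n] {h : Matrix n n 𝕜} (hc : Commute M h) :
    Commute (projPlus M) h :=
  ((Commute.one_left h).add_left hc).smul_left _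

lemma dotProduct_star_projPlus_mulVec [Fintype n] [CharZero 𝕜] [StarRing 𝕜]
    (hMh : M.IsHermitian) (hM : M * M = 1) (ψ : n → 𝕜) :
    star (projPlus M *ᵥ ψ) ⬝ᵥ (projPlus M *ᵥ ψ) =
      (2 : 𝕜)⁻¹ * (star ψ ⬝ᵥ ψ + star ψ ⬝ᵥ (M *ᵥ ψ)) := by
  rw [Matrix.star_mulVec, (isHermitian_projPlus hMh).eq, ← Matrix.dotProduct_mulVec,
    Matrix.mulVec_mulVec, (isIdempotentElem_projPlus hM).eq, Matrix.smul_mulVec,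
    dotProduct_smul, Matrix.add_mulVec, Matrix.one_mulVec, dotProduct_add, smul_eq_mul]

end Projection

lemma dotProduct_star_self_eq_sum_normSq {n : Type*} [Fintype n] (v : n → ℂ) :
    star v ⬝ᵥ v = ((∑ i, Complex.normSq (v i) : ℝ) : ℂ) := by
  simp only [dotProduct, Pi.star_apply, Complex.ofReal_sum, Complex.star_def,
    Complex.normSq_eq_conj_mul_self]

theorem projective_measurement_outcome_general {N : ℕ}
    (ψ : (Fin N → Fin 2) → ℂ) (hψ : IsUnitVec ψ)
    (G : Finset (Op (Fin N)))
    (hherm : ∀ g ∈ G, Matrix.IsHermitian g)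
    (hstab : ∀ g ∈ G, g *ᵥ ψ = ψ)
    (M : Op (Fin N)) (hM : IsPauli M) (hMherm : M.IsHermitian)
    (g₀ : Op (Fin N)) (hg₀ : g₀ ∈ G) (hanti : M * g₀ = -(g₀ * M)) :
    (∑ f, Complex.normSq ((((2 : ℂ)⁻¹ • (1 + M)) *ᵥ ψ) f)) = 1 / 2 ∧
    M *ᵥ ((Real.sqrt 2 : ℂ) • (((2 : ℂ)⁻¹ • (1 + M)) *ᵥ ψ))
        = (Real.sqrt 2 : ℂ) • (((2 : ℂ)⁻¹ • (1 + M)) *ᵥ ψ) ∧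
    ∀ h ∈ G, M * h = h * M →
      h *ᵥ ((Real.sqrt 2 : ℂ) • (((2 : ℂ)⁻¹ • (1 + M)) *ᵥ ψ))
        = (Real.sqrt 2 : ℂ) • (((2 : ℂ)⁻¹ • (1 + M)) *ᵥ ψ) := by
  have hM2 : M * M = 1 := hM.mul_self_of_isHermitian hMherm
  have hMψ : star ψ ⬝ᵥ (M *ᵥ ψ) = 0 :=
    dotProduct_mulVec_eq_zero_of_anticommute (hherm g₀ hg₀) (hstab g₀ hg₀) hanti
  rw [show (2 : ℂ)⁻¹ • (1 + M) = projPlus M from rfl]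
  refine ⟨?_, ?_, fun h hG hcomm => ?_⟩
  · have hnorm := dotProduct_star_projPlus_mulVec hMherm hM2 ψ
    rw [hMψ, add_zero, dotProduct_star_self_eq_sum_normSq,
      dotProduct_star_self_eq_sum_normSq, show ∑ f, Complex.normSq (ψ f) = 1 from hψ] at hnorm
    apply Complex.ofReal_injective
    rw [hnorm]
    norm_num
  · rw [Matrix.mulVec_smul, Matrix.mulVec_mulVec, mul_projPlus hM2]
  · rw [Matrix.mulVec_smul, Matrix.mulVec_mulVec, ← (commute_projPlus_left hcomm).eq,
      ← Matrix.mulVec_mulVec, hstab h hG]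

/-- Let `ψ` be a unit vector stabilized by a group `G` of Hermitian Pauli
strings and let `M` be a Hermitian Pauli string anticommuting with at least one element of
`G`.  Then `‖Π₊ ψ‖² = 1/2` where `Π₊ = (I + M)/2`, and the unit vector `φ = √2 · Π₊ ψ`
satisfies `M φ = φ` and `h φ = φ` for every `h ∈ C_G(M)`. -/
theorem projective_measurement_outcome {N : ℕ}
    (ψ : (Fin N → Fin 2) → ℂ) (hψ : IsUnitVec ψ)
    (G : Finset (Op (Fin N))) (hone : (1 : Op (Fin N)) ∈ G)
    (hmul : ∀ g ∈ G, ∀ h ∈ G, g * h ∈ G)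
    (hpauli : ∀ g ∈ G, IsPauli g)
    (hherm : ∀ g ∈ G, Matrix.IsHermitian g)
    (hstab : ∀ g ∈ G, g *ᵥ ψ = ψ)
    (M : Op (Fin N)) (hM : IsPauli M) (hMherm : M.IsHermitian)
    (g₀ : Op (Fin N)) (hg₀ : g₀ ∈ G) (hanti : M * g₀ = -(g₀ * M)) :
    (∑ f, Complex.normSq ((((2 : ℂ)⁻¹ • (1 + M)) *ᵥ ψ) f)) = 1 / 2 ∧
    M *ᵥ ((Real.sqrt 2 : ℂ) • (((2 : ℂ)⁻¹ • (1 + M)) *ᵥ ψ))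
        = (Real.sqrt 2 : ℂ) • (((2 : ℂ)⁻¹ • (1 + M)) *ᵥ ψ) ∧
    ∀ h ∈ G, M * h = h * M →
      h *ᵥ ((Real.sqrt 2 : ℂ) • (((2 : ℂ)⁻¹ • (1 + M)) *ᵥ ψ))
        = (Real.sqrt 2 : ℂ) • (((2 : ℂ)⁻¹ • (1 + M)) *ᵥ ψ) :=
  projective_measurement_outcome_general ψ hψ G hherm hstab M hM hMherm g₀ hg₀ hanti

end QStab
end
end

section
/- Let N be even and define the measurement-update map on subgroups of the group of invertible matrices: Meas(G, M, ε) = G if the Hermitian Pauli string M commutes with every element of G, and otherwise Meas(G, M, ε) is the subgroup generated by C_G(M) ∪ {ε M}, where ε ∈ {1, −1}. Let G₀ be the subgroup generated by Z 1, …, Z N, and let G be obtained from G₀ by finitely many updates G ↦ Meas(G, M, ε), where each measured operator M is either Z i (1 ≤ i ≤ N) or g i = X(i−1) Z i X(i+1) (2 ≤ i ≤ N−1) and each ε ∈ {1, −1} is arbitrary. Then G is generated by N elements, each of which is, up to a sign ±1, of one of the four forms: Z_{2j+1,2k+1} = ∏_{i=j}^{k} Z(2i+1); Z_{2j,2k}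 = ∏_{i=j}^{k} Z(2i); g_{2j+1,2k+1} = X(2j+1) Z_{2j+2,2k} X(2k+1); g_{2j,2k} = X(2j) Z_{2j+1,2k−1} X(2k). -/
open scoped Classical
open scoped Matrix
noncomputable section
namespace QStab

variable {ι : Type*} [Fintype ι] [DecidableEq ι]

/-!
The invariant is that the stabilizer group is generated by `N` commuting signed Pauli strings,
each `± Z_{p,q}` or `± g_{p,q}`, whose binary vectors have no vanishing subset sum. It holds for
`⟨Z 1, …, Z N⟩`. Measuring a Pauli `M` that anticommutes with some generator `s k` is the
Gottesman–Knill update: `s k` becomes `± M` and every other generator `s t` anticommuting with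
`M` becomes `s t s k`. The strings anticommuting with `Z m` are the `g`-strings with an end at
`m`, and the product of two of them is the `g`-string joining their other ends; the strings
anticommuting with `g m` are the `Z`-strings ending at `m - 1` or starting at `m + 1`, and the
product of two of them is again a `Z`-string. Independence makes the two factors distinct, so
the product is never `± 1`, and it is preserved by the update.
-/

open Matrix Set

section AntiCommute

variable {R : Type*} [Ring R]

def AntiCommute (a b : R) : Prop := a * b = -(b * a)

theorem AntiCommute.mul_right_of_commute {a b c : R} (hb : AntiCommute a b) (hc : Commute a c) :
    AntiCommute a (b * c) := by
  unfold AntiCommute at *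
  rw [← mul_assoc, hb, neg_mul, mul_assoc, hc.eq, mul_assoc]

theorem Commute.anticommute_mul_right {a b c : R} (hb : Commute a b) (hc : AntiCommute a c) :
    AntiCommute a (b * c) := by
  unfold AntiCommute at *
  rw [← mul_assoc, hb.eq, mul_assoc, hc, mul_neg, mul_assoc]

theorem AntiCommute.commute_mul_right {a b c : R} (hb : AntiCommute a b) (hc : AntiCommute a c) :
    Commute a (b * c) := by
  unfold AntiCommute at *
  rw [Commute, SemiconjBy, ← mul_assoc, hb, neg_mul, mul_assoc, hc, mul_neg, neg_neg, mul_assoc]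

theorem AntiCommute.not_commute [Nontrivial R] [Module ℂ R] [NoZeroSMulDivisors ℂ R]
    {a b : R} (ha : IsUnit a) (hb : IsUnit b) (h : AntiCommute a b) : ¬ Commute a b := by
  intro hc
  have h2 : (2 : ℂ) • (a * b) = 0 := by
    rw [two_smul]
    nth_rewrite 2 [h]
    rw [hc.eq, add_neg_cancel]
  have hab : a * b = 0 := (smul_eq_zero.mp h2).resolve_left two_ne_zero
  exact not_isUnit_zero (hab ▸ ha.mul hb)

end AntiCommute

theorem fin2_add_self (x : Fin 2) : x + x = 0 := by
  revert x; decide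

theorem fin2_eq_iff_add_eq_zero {x y : Fin 2} : x = y ↔ x + y = 0 := by
  revert x y; decide

def sgn (x : Fin 2) : ℂ := if x = 0 then 1 else -1

theorem sgn_zero : sgn 0 = 1 := rfl

theorem sgn_add (x y : Fin 2) : sgn (x + y) = sgn x * sgn y := by
  fin_cases x <;> fin_cases y <;> simp [sgn]

theorem sgn_injective : Function.Injective sgn := by
  intro x y h
  fin_cases x <;> fin_cases y <;> first | rfl | norm_num [sgn] at h

theorem sgn_eq_one_or_neg_one (x : Fin 2) : sgn x = 1 ∨ sgn x = -1 := by
  fin_cases x <;> simp [sgn]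

theorem sgn_eq_neg_of_ne {x y : Fin 2} (h : x ≠ y) : sgn x = -sgn y := by
  fin_cases x <;> fin_cases y <;> simp_all [sgn]

theorem sgn_eq_neg_one_pow (x : Fin 2) : sgn x = (-1) ^ (x : ℕ) := by
  fin_cases x <;> simp [sgn]

/-- `(a, b)` labels the Pauli string `X^a Z^b`. -/
abbrev PauliVec (ι : Type*) := (ι → Fin 2) × (ι → Fin 2)

theorem PauliVec.add_self {ι : Type*} (v : PauliVec ι) : v + v = 0 :=
  Prod.ext (funext fun _ => fin2_add_self _) (funext fun _ => fin2_add_self _)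

def pauli (v : PauliVec ι) : Op ι :=
  Matrix.of fun f g => if f = g + v.1 then sgn (v.2 ⬝ᵥ g) else 0

def symp {ι : Type*} [Fintype ι] (u v : PauliVec ι) : Fin 2 := u.2 ⬝ᵥ v.1 + v.2 ⬝ᵥ u.1

theorem symp_add_left {ι : Type*} [Fintype ι] (u u' v : PauliVec ι) :
    symp (u + u') v = symp u v + symp u' v := by
  simp only [symp, Prod.fst_add, Prod.snd_add, add_dotProduct, dotProduct_add]
  abel

theorem pauli_mul (u v : PauliVec ι) : pauli u * pauli v = sgn (u.2 ⬝ᵥ v.1) • pauli (u + v) := by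
  ext f g
  rw [Matrix.mul_apply, Matrix.smul_apply, Finset.sum_eq_single (g + v.1)]
  · have hsum : g + v.1 + u.1 = g + (u + v).1 := by rw [Prod.fst_add]; abel
    simp only [pauli, Matrix.of_apply, hsum, Prod.snd_add, add_dotProduct, dotProduct_add,
      sgn_add, smul_eq_mul]
    split_ifs <;> ring
  · intro h _ hh
    simp [pauli, hh]
  · simp

theorem pauli_zero : (pauli 0 : Op ι) = 1 := by
  ext f g
  simp [pauli, Matrix.one_apply, sgn_zero]

theorem smul_pauli_mul_smul_pauli (c d : ℂ) (u v : PauliVec ι) :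
    (c • pauli u) * (d • pauli v) = (c * d * sgn (u.2 ⬝ᵥ v.1)) • pauli (u + v) := by
  rw [smul_mul_smul_comm, pauli_mul, smul_smul]

theorem smul_pauli_mul_self {c : ℂ} (hc : c = 1 ∨ c = -1) {v : PauliVec ι}
    (hv : v.2 ⬝ᵥ v.1 = 0) : (c • pauli v) * (c • pauli v) = 1 := by
  rw [smul_pauli_mul_smul_pauli, PauliVec.add_self, pauli_zero, hv, sgn_zero]
  rcases hc with rfl | rfl <;> norm_num

theorem smul_pauli_left_injective (v : PauliVec ι) :
    Function.Injective fun c : ℂ => c • pauli v := by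
  intro c d h
  simpa [pauli, sgn_zero] using congrFun (congrFun h v.1) 0

theorem smul_pauli_commute_iff {c d : ℂ} (hc : c ≠ 0) (hd : d ≠ 0) (u v : PauliVec ι) :
    Commute (c • pauli u) (d • pauli v) ↔ symp u v = 0 := by
  rw [Commute, SemiconjBy, smul_pauli_mul_smul_pauli, smul_pauli_mul_smul_pauli, add_comm v,
    (smul_pauli_left_injective _).eq_iff, mul_comm d c, mul_right_inj' (mul_ne_zero hc hd),
    sgn_injective.eq_iff, symp]
  exact fin2_eq_iff_add_eq_zero

theorem smul_pauli_anticommute (c d : ℂ) {u v : PauliVec ι} (h : symp u v ≠ 0) :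
    AntiCommute (c • pauli u) (d • pauli v) := by
  have hs := sgn_eq_neg_of_ne (fin2_eq_iff_add_eq_zero.not.mpr h)
  rw [AntiCommute, smul_pauli_mul_smul_pauli, smul_pauli_mul_smul_pauli, add_comm v, hs,
    ← neg_smul]
  ring_nf

theorem list_prod_pauli {α : Type*} (l : List α) (w : α → PauliVec ι)
    (hw : ∀ i j, (w i).2 ⬝ᵥ (w j).1 = 0) :
    (l.map fun i => pauli (w i)).prod = pauli (l.map w).sum := by
  induction l with
  | nil => exact pauli_zero.symm
  | cons i l ih =>
    have horth : ∀ l' : List α, (w i).2 ⬝ᵥ (l'.map w).sum.1 = 0 := by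
      intro l'
      induction l' with
      | nil => exact dotProduct_zero _
      | cons j l' ih' => rw [List.map_cons, List.sum_cons, Prod.fst_add, dotProduct_add, hw, ih',
          add_zero]
    rw [List.map_cons, List.prod_cons, ih, pauli_mul, horth, sgn_zero, one_smul, List.map_cons,
      List.sum_cons]

theorem PZ_eq_pauli (i : ι) : PZ i = pauli (0, Pi.single i 1) := by
  ext f g
  by_cases h : f = g
  · subst h
    simp [PZ, pauli, sgn_eq_neg_one_pow]
  · simp [PZ, pauli, h]

theorem PX_eq_pauli (i : ι) : PX i = pauli (Pi.single i 1, 0) := by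
  ext f g
  have : Function.update g i (g i + 1) = g + Pi.single i 1 := by
    funext j
    by_cases hj : j = i
    · subst hj; simp
    · simp [hj]
  simp [PX, pauli, this, sgn_zero]

theorem ZProd_eq_pauli (b : ι → Fin 2) : ZProd b = pauli (0, b) := by
  have hpow : ∀ (i : ι) (x : Fin 2), PZ i ^ (x : ℕ) = pauli (0, Pi.single i x) := by
    intro i x
    fin_cases x
    · simp [← pauli_zero]; rfl
    · simp [PZ_eq_pauli]
  simp only [ZProd, hpow]
  rw [list_prod_pauli _ _ fun _ _ => dotProduct_zero _, Finset.sum_map_toList]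
  congr 1
  ext1
  · simp [Prod.fst_sum]
  · simp [Prod.snd_sum, Finset.univ_sum_single]

theorem XProd_eq_pauli (a : ι → Fin 2) : XProd a = pauli (a, 0) := by
  have hpow : ∀ (i : ι) (x : Fin 2), PX i ^ (x : ℕ) = pauli (Pi.single i x, 0) := by
    intro i x
    fin_cases x
    · simp [← pauli_zero]; rfl
    · simp [PX_eq_pauli]
  simp only [XProd, hpow]
  rw [list_prod_pauli _ _ fun _ _ => zero_dotProduct _, Finset.sum_map_toList]
  congr 1
  ext1
  · simp [Prod.fst_sum, Finset.univ_sum_single]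
  · simp [Prod.snd_sum]

theorem XProd_mul_ZProd (a b : ι → Fin 2) : XProd a * ZProd b = pauli (a, b) := by
  rw [XProd_eq_pauli, ZProd_eq_pauli, pauli_mul, zero_dotProduct, sgn_zero, one_smul]
  simp

section Measurement

variable {τ : Type*}

theorem commute_of_mem_closure {R : Type*} [Monoid R] {s : τ → R} {a : R}
    (h : ∀ t, Commute a (s t)) {g : R} (hg : g ∈ Submonoid.closure (range s)) : Commute a g := by
  induction hg using Submonoid.closure_induction with
  | mem x hx => obtain ⟨t, rfl⟩ := hx; exact h t
  | one => exact Commute.one_right a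
  | mul x y _ _ hx hy => exact hx.mul_right hy

theorem commute_of_mem_closure_of_mem_closure {R : Type*} [Monoid R] {s : τ → R}
    (hs : ∀ t u, Commute (s t) (s u)) {g g' : R} (hg : g ∈ Submonoid.closure (range s))
    (hg' : g' ∈ Submonoid.closure (range s)) : Commute g g' :=
  commute_of_mem_closure (fun t => (commute_of_mem_closure (fun u => hs t u) hg).symm) hg'

theorem isUnit_of_mem_closure {R : Type*} [Monoid R] {s : τ → R} (hs : ∀ t, s t * s t = 1)
    {g : R} (hg : g ∈ Submonoid.closure (range s)) : IsUnit g :=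
  (Submonoid.closure_le (S := IsUnit.submonoid R)).mpr
    (by rintro _ ⟨t, rfl⟩; exact ⟨⟨s t, s t, hs t, hs t⟩, rfl⟩) hg

theorem meas_closure_of_forall_commute {s : τ → Op ι} {M : Op ι} (ε : ℂ)
    (h : ∀ t, Commute M (s t)) :
    Meas (Submonoid.closure (range s)) M ε = Submonoid.closure (range s) :=
  if_pos fun _ hg => (commute_of_mem_closure h hg).eq

/-- The Gottesman–Knill update of the generators `s` on measuring `M`, with pivot `s k`. -/
def pivotUpdate (s : τ → Op ι) (M : Op ι) (ε : ℂ) (k t : τ) : Op ι :=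
  if t = k then ε • M else if Commute M (s t) then s t else s t * s k

variable {s : τ → Op ι} {M : Op ι} {k : τ}

theorem pivotUpdate_mem_closure_and_commute (ε : ℂ)
    (hM : ∀ t, Commute M (s t) ∨ AntiCommute M (s t)) (hk : ¬ Commute M (s k))
    {t : τ} (htk : t ≠ k) :
    pivotUpdate s M ε k t ∈ Submonoid.closure (range s) ∧ Commute M (pivotUpdate s M ε k t) := by
  by_cases hc : Commute M (s t)
  · simp only [pivotUpdate, if_neg htk, if_pos hc]
    exact ⟨Submonoid.subset_closure ⟨t, rfl⟩, hc⟩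
  · simp only [pivotUpdate, if_neg htk, if_neg hc]
    exact ⟨mul_mem (Submonoid.subset_closure ⟨t, rfl⟩) (Submonoid.subset_closure ⟨k, rfl⟩),
      ((hM t).resolve_left hc).commute_mul_right ((hM k).resolve_left hk)⟩

theorem commute_pivotUpdate (ε : ℂ) (hcomm : ∀ t u, Commute (s t) (s u))
    (hM : ∀ t, Commute M (s t) ∨ AntiCommute M (s t)) (hk : ¬ Commute M (s k)) (t u : τ) :
    Commute (pivotUpdate s M ε k t) (pivotUpdate s M ε k u) := by
  have hpivot : pivotUpdate s M ε k k = ε • M := if_pos rfl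
  have hrest := fun {t} => pivotUpdate_mem_closure_and_commute (t := t) ε hM hk
  by_cases htk : t = k <;> by_cases huk : u = k
  · rw [htk, huk]
  · rw [htk, hpivot]
    exact (hrest huk).2.smul_left ε
  · rw [huk, hpivot]
    exact ((hrest htk).2.smul_left ε).symm
  · exact commute_of_mem_closure_of_mem_closure hcomm (hrest htk).1 (hrest huk).1

theorem commute_mem_or_anticommute_mul_mem (ε : ℂ) (hcomm : ∀ t u, Commute (s t) (s u))
    (hk2 : s k * s k = 1) (hM : ∀ t, Commute M (s t) ∨ AntiCommute M (s t))
    (hk : ¬ Commute M (s k)) {g : Op ι} (hg : g ∈ Submonoid.closure (range s)) :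
    (Commute M g ∧ g ∈ Submonoid.closure (range (pivotUpdate s M ε k))) ∨
      (AntiCommute M g ∧ g * s k ∈ Submonoid.closure (range (pivotUpdate s M ε k))) := by
  set H := Submonoid.closure (range (pivotUpdate s M ε k))
  have hmem : ∀ t, pivotUpdate s M ε k t ∈ H := fun t => Submonoid.subset_closure ⟨t, rfl⟩
  induction hg using Submonoid.closure_induction with
  | mem x hx =>
    obtain ⟨t, rfl⟩ := hx
    by_cases hc : Commute M (s t)
    · have htk : t ≠ k := by rintro rfl; exact hk hc
      refine Or.inl ⟨hc, ?_⟩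
      simpa [pivotUpdate, htk, hc] using hmem t
    · refine Or.inr ⟨(hM t).resolve_left hc, ?_⟩
      by_cases htk : t = k
      · rw [htk, hk2]
        exact H.one_mem
      · simpa [pivotUpdate, htk, hc] using hmem t
  | one => exact Or.inl ⟨Commute.one_right M, H.one_mem⟩
  | mul x y _ hy ihx ihy =>
    have hyk : Commute (s k) y := commute_of_mem_closure (fun t => hcomm k t) hy
    rcases ihx with ⟨hx', hxH⟩ | ⟨hx', hxH⟩ <;> rcases ihy with ⟨hy', hyH⟩ | ⟨hy', hyH⟩
    · exact Or.inl ⟨Commute.mul_right hx' hy', H.mul_mem hxH hyH⟩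
    · refine Or.inr ⟨Commute.anticommute_mul_right hx' hy', ?_⟩
      rw [mul_assoc]
      exact H.mul_mem hxH hyH
    · refine Or.inr ⟨AntiCommute.mul_right_of_commute hx' hy', ?_⟩
      rw [mul_assoc, ← hyk.eq, ← mul_assoc]
      exact H.mul_mem hxH hyH
    · refine Or.inl ⟨AntiCommute.commute_mul_right hx' hy', ?_⟩
      have hxy : x * y = x * s k * (y * s k) := by
        rw [← hyk.eq, mul_assoc x, ← mul_assoc (s k), hk2, one_mul]
      rw [hxy]
      exact H.mul_mem hxH hyH

theorem meas_closure_eq_closure_pivotUpdate (ε : ℂ) (hcomm : ∀ t u, Commute (s t) (s u))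
    (hinv : ∀ t, s t * s t = 1) (hMinv : M * M = 1)
    (hM : ∀ t, Commute M (s t) ∨ AntiCommute M (s t)) (hk : ¬ Commute M (s k)) :
    Meas (Submonoid.closure (range s)) M ε = Submonoid.closure (range (pivotUpdate s M ε k)) := by
  rw [Meas, if_neg fun h => hk (h (s k) (Submonoid.subset_closure ⟨k, rfl⟩))]
  apply le_antisymm
  · rw [Submonoid.closure_le]
    rintro g (⟨hg, hgM⟩ | rfl)
    · rcases commute_mem_or_anticommute_mul_mem ε hcomm (hinv k) hM hk hg with
        ⟨-, hH⟩ | ⟨hanti, -⟩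
      · exact hH
      · exact absurd hgM (hanti.not_commute ⟨⟨M, M, hMinv, hMinv⟩, rfl⟩
          (isUnit_of_mem_closure hinv hg))
    · exact Submonoid.subset_closure ⟨k, if_pos rfl⟩
  · rw [Submonoid.closure_le]
    rintro _ ⟨t, rfl⟩
    apply Submonoid.subset_closure
    by_cases htk : t = k
    · exact Or.inr (if_pos htk)
    · exact Or.inl (pivotUpdate_mem_closure_and_commute ε hM hk htk)

end Measurement

theorem mul_eq_one_or_neg_one {a b : ℂ} (ha : a = 1 ∨ a = -1) (hb : b = 1 ∨ b = -1) :
    a * b = 1 ∨ a * b = -1 := by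
  rcases ha with rfl | rfl <;> rcases hb with rfl | rfl <;> norm_num

theorem ne_zero_of_eq_one_or_neg_one {a : ℂ} (ha : a = 1 ∨ a = -1) : a ≠ 0 := by
  rcases ha with rfl | rfl <;> norm_num

theorem fin2_eq_one_of_ne_zero {x : Fin 2} (h : x ≠ 0) : x = 1 := by
  revert x; decide

section SubsetSumFree

variable {τ A : Type*}

def SubsetSumFree [AddCommMonoid A] (v : τ → A) : Prop :=
  ∀ T : Finset τ, ∑ t ∈ T, v t = 0 → T = ∅

theorem nsmul_eq_ite_even [AddMonoid A] (hA : ∀ x : A, x + x = 0) (m : ℕ) (x : A) :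
    m • x = if Even m then 0 else x := by
  induction m with
  | zero => simp
  | succ m ih =>
    by_cases h : Even m <;> simp [succ_nsmul, ih, Nat.even_add_one, h, hA]

variable [AddCommMonoid A] {v : τ → A}

theorem SubsetSumFree.ne (hv : SubsetSumFree v) (hA : ∀ x : A, x + x = 0) {t u : τ}
    (htu : t ≠ u) : v t ≠ v u := by
  intro h
  exact Finset.insert_ne_empty _ _ (hv {t, u} (by rw [Finset.sum_pair htu, h, hA]))

/-- Independence survives the pivot update: a functional `φ` vanishing on the old vectors but
not on `w` rules out the new pivot from a vanishing subset sum, and without it a subset sum of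
new vectors is a subset sum of old ones. -/
theorem SubsetSumFree.pivot (hv : SubsetSumFree v) (hA : ∀ x : A, x + x = 0) (φ : A →+ Fin 2)
    (hφv : ∀ t, φ (v t) = 0) {w : A} (hφw : φ w = 1) (k : τ) (C : τ → Prop)
    [DecidablePred C] :
    SubsetSumFree fun t => if t = k then w else if C t then v t else v t + v k := by
  intro T hT
  have hkT : k ∉ T := by
    intro hk
    have h1 := congrArg φ hT
    rw [map_sum, Finset.sum_eq_single_of_mem k hk, if_pos rfl, hφw, map_zero] at h1
    · exact absurd h1 (by decide)
    · intro t _ htk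
      simp only [if_neg htk]
      split_ifs <;> simp [hφv]
  have hsum : ∑ t ∈ T, (if t = k then w else if C t then v t else v t + v k) =
      ∑ t ∈ T, v t + (T.filter fun t => ¬ C t).card • v k := by
    rw [← Finset.sum_const, Finset.sum_filter, ← Finset.sum_add_distrib]
    refine Finset.sum_congr rfl fun t ht => ?_
    rw [if_neg (ne_of_mem_of_not_mem ht hkT)]
    split_ifs <;> simp
  rw [hsum, nsmul_eq_ite_even hA] at hT
  split_ifs at hT
  · exact hv T (by rwa [add_zero] at hT)
  · exact absurd (hv (insert k T) (by rwa [Finset.sum_insert hkT, add_comm]))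
      (Finset.insert_ne_empty _ _)

end SubsetSumFree

structure PauliGens (τ : Type*) (P : PauliVec ι → Prop) where
  sign : τ → ℂ
  vec : τ → PauliVec ι
  sign_eq : ∀ t, sign t = 1 ∨ sign t = -1
  prop : ∀ t, P (vec t)
  commute : ∀ t u, Commute (sign t • pauli (vec t)) (sign u • pauli (vec u))
  indep : SubsetSumFree vec

namespace PauliGens

variable {τ : Type*} {P : PauliVec ι → Prop} (F : PauliGens τ P)

def op (t : τ) : Op ι := F.sign t • pauli (F.vec t)

theorem pauli_commute_op_iff (w : PauliVec ι) (t : τ) :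
    Commute (pauli w) (F.op t) ↔ symp w (F.vec t) = 0 := by
  rw [← one_smul ℂ (pauli w)]
  exact smul_pauli_commute_iff one_ne_zero (ne_zero_of_eq_one_or_neg_one (F.sign_eq t)) _ _

def pivotSign (w : PauliVec ι) (ε : ℂ) (k t : τ) : ℂ :=
  if t = k then ε
  else if symp w (F.vec t) = 0 then F.sign t
  else F.sign t * F.sign k * sgn ((F.vec t).2 ⬝ᵥ (F.vec k).1)

def pivotVec (w : PauliVec ι) (k t : τ) : PauliVec ι :=
  if t = k then w else if symp w (F.vec t) = 0 then F.vec t else F.vec t + F.vec k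

theorem pivotSign_smul_pauli_pivotVec (w : PauliVec ι) (ε : ℂ) (k : τ) :
    (fun t => F.pivotSign w ε k t • pauli (F.pivotVec w k t)) =
      pivotUpdate F.op (pauli w) ε k := by
  funext t
  simp only [pivotSign, pivotVec, pivotUpdate, pauli_commute_op_iff]
  split_ifs
  · rfl
  · rfl
  · rw [op, op, smul_pauli_mul_smul_pauli]

theorem commute_or_anticommute_op (w : PauliVec ι) (t : τ) :
    Commute (pauli w) (F.op t) ∨ AntiCommute (pauli w) (F.op t) := by
  by_cases h : symp w (F.vec t) = 0
  · exact Or.inl ((F.pauli_commute_op_iff w t).mpr h)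
  · rw [← one_smul ℂ (pauli w)]
    exact Or.inr (smul_pauli_anticommute _ _ h)

theorem op_mul_self (hP : ∀ v, P v → v.2 ⬝ᵥ v.1 = 0) (t : τ) : F.op t * F.op t = 1 :=
  smul_pauli_mul_self (F.sign_eq t) (hP _ (F.prop t))

theorem symp_vec_vec (t u : τ) : symp (F.vec t) (F.vec u) = 0 :=
  (smul_pauli_commute_iff (ne_zero_of_eq_one_or_neg_one (F.sign_eq t))
    (ne_zero_of_eq_one_or_neg_one (F.sign_eq u)) _ _).mp (F.commute t u)

theorem pivotSign_eq_one_or_neg_one {ε : ℂ} (hε : ε = 1 ∨ ε = -1) (w : PauliVec ι) (k t : τ) :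
    F.pivotSign w ε k t = 1 ∨ F.pivotSign w ε k t = -1 := by
  unfold pivotSign
  split_ifs
  · exact hε
  · exact F.sign_eq t
  · exact mul_eq_one_or_neg_one (mul_eq_one_or_neg_one (F.sign_eq t) (F.sign_eq k))
      (sgn_eq_one_or_neg_one _)

theorem prop_pivotVec {w : PauliVec ι} (hw : P w)
    (hmerge : ∀ v v', P v → P v' → v ≠ v' → symp w v = 1 → symp w v' = 1 → P (v + v'))
    {k : τ} (hwk : symp w (F.vec k) = 1) (t : τ) : P (F.pivotVec w k t) := by
  unfold pivotVec
  split_ifs with htk hc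
  · exact hw
  · exact F.prop t
  · exact hmerge _ _ (F.prop t) (F.prop k) (F.indep.ne PauliVec.add_self htk)
      (fin2_eq_one_of_ne_zero hc) hwk

theorem subsetSumFree_pivotVec {w : PauliVec ι} {k : τ} (hwk : symp w (F.vec k) = 1) :
    SubsetSumFree (F.pivotVec w k) :=
  F.indep.pivot PauliVec.add_self
    { toFun := fun x => symp x (F.vec k)
      map_zero' := by simp [symp]
      map_add' := fun x y => symp_add_left x y _ }
    (fun t => F.symp_vec_vec t k) hwk k (fun t => symp w (F.vec t) = 0)

theorem exists_meas_eq (hP : ∀ v, P v → v.2 ⬝ᵥ v.1 = 0) {w : PauliVec ι} (hw : P w)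
    (hmerge : ∀ v v', P v → P v' → v ≠ v' → symp w v = 1 → symp w v' = 1 → P (v + v'))
    {ε : ℂ} (hε : ε = 1 ∨ ε = -1) :
    ∃ F' : PauliGens τ P, Meas (Submonoid.closure (range F.op)) (pauli w) ε =
      Submonoid.closure (range F'.op) := by
  by_cases hall : ∀ t, Commute (pauli w) (F.op t)
  · exact ⟨F, meas_closure_of_forall_commute ε hall⟩
  obtain ⟨k, hk⟩ := not_forall.mp hall
  have hwk : symp w (F.vec k) = 1 :=
    fin2_eq_one_of_ne_zero ((F.pauli_commute_op_iff w k).not.mp hk)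
  have hMinv : pauli w * pauli w = 1 := by
    simpa using smul_pauli_mul_self (Or.inl rfl) (hP w hw)
  have hop := F.pivotSign_smul_pauli_pivotVec w ε k
  refine ⟨⟨F.pivotSign w ε k, F.pivotVec w k, F.pivotSign_eq_one_or_neg_one hε w k,
    F.prop_pivotVec hw hmerge hwk, fun t u => ?_, F.subsetSumFree_pivotVec hwk⟩, ?_⟩
  · rw [congrFun hop t, congrFun hop u]
    exact commute_pivotUpdate (s := F.op) ε F.commute (F.commute_or_anticommute_op w) hk t u
  · rw [meas_closure_eq_closure_pivotUpdate (s := F.op) ε F.commute (F.op_mul_self hP) hMinv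
      (F.commute_or_anticommute_op w) hk]
    exact congrArg (fun s => Submonoid.closure (range s)) hop.symm

end PauliGens

section Chain

variable {N : ℕ}

theorem one_le_lbl (i : Fin N) : 1 ≤ lbl i := Nat.le_add_left 1 i

theorem lbl_le (i : Fin N) : lbl i ≤ N := i.isLt

def lblInd (N : ℕ) (S : ℕ → Prop) [DecidablePred S] : Fin N → Fin 2 :=
  fun i => if S (lbl i) then 1 else 0

theorem lblInd_congr {S S' : ℕ → Prop} [DecidablePred S] [DecidablePred S']
    (h : ∀ l, 1 ≤ l → l ≤ N → (S l ↔ S' l)) : lblInd N S = lblInd N S' := by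
  funext i
  simp only [lblInd, h _ (one_le_lbl i) (lbl_le i)]

theorem lblInd_add_lblInd {S S' S'' : ℕ → Prop} [DecidablePred S] [DecidablePred S']
    [DecidablePred S''] (h : ∀ l, 1 ≤ l → l ≤ N → (S'' l ↔ (S l ↔ ¬ S' l))) :
    lblInd N S + lblInd N S' = lblInd N S'' := by
  funext i
  have := h _ (one_le_lbl i) (lbl_le i)
  simp only [lblInd, Pi.add_apply]
  split_ifs <;> first | decide | tauto

theorem lblInd_eq_single (j : Fin N) : lblInd N (· = lbl j) = Pi.single j 1 := by
  funext i
  simp [lblInd, Pi.single_apply, lbl, Fin.ext_iff]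

theorem lblInd_dotProduct_lblInd_eq (S : ℕ → Prop) [DecidablePred S] {m : ℕ} (h1 : 1 ≤ m)
    (h2 : m ≤ N) :
    lblInd N S ⬝ᵥ lblInd N (· = m) = if S m then 1 else 0 := by
  obtain ⟨j, rfl⟩ : ∃ j : Fin N, lbl j = m := ⟨⟨m - 1, by omega⟩, by simp [lbl]; omega⟩
  rw [lblInd_eq_single, dotProduct_single, mul_one, lblInd]

theorem lblInd_or {p q : ℕ} (h : p ≠ q) :
    lblInd N (fun l => l = p ∨ l = q) = lblInd N (· = p) + lblInd N (· = q) :=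
  (lblInd_add_lblInd fun l _ _ => by omega).symm

/-- `z p q` is the string `Z_{p,q}` and `g p q` the string `g_{p,q}`. -/
inductive ChainString
  | z (p q : ℕ)
  | g (p q : ℕ)

namespace ChainString

def pauliVec (N : ℕ) : ChainString → PauliVec (Fin N)
  | z p q => (0, lblInd N fun l => p ≤ l ∧ l ≤ q ∧ l % 2 = p % 2)
  | g p q => (lblInd N fun l => l = p ∨ l = q, lblInd N fun l => p < l ∧ l < q ∧ ¬l % 2 = p % 2)

def WF (N : ℕ) : ChainString → Prop
  | z p q => 1 ≤ p ∧ p ≤ q ∧ q ≤ N ∧ p % 2 = q % 2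
  | g p q => 1 ≤ p ∧ p < q ∧ q ≤ N ∧ p % 2 = q % 2

theorem pauli_pauliVec_z (p q : ℕ) : pauli ((z p q).pauliVec N) = ZStr N p q := by
  rw [ZStr, ZProd_eq_pauli, pauliVec]; rfl

theorem pauli_pauliVec_g (p q : ℕ) : pauli ((g p q).pauliVec N) = GStr N p q := by
  rw [GStr, XProd_mul_ZProd, pauliVec]; rfl

theorem pauliVec_z_lbl (j : Fin N) : (z (lbl j) (lbl j)).pauliVec N = (0, Pi.single j 1) := by
  rw [pauliVec, ← lblInd_eq_single]
  congr 1
  exact lblInd_congr fun l _ _ => by omega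

theorem dotProduct_pauliVec_eq_zero {σ : ChainString} (hσ : σ.WF N) :
    (σ.pauliVec N).2 ⬝ᵥ (σ.pauliVec N).1 = 0 := by
  cases σ with
  | z p q => exact dotProduct_zero _
  | g p q =>
    obtain ⟨h1, h2, h3, -⟩ := hσ
    rw [pauliVec, lblInd_or h2.ne, dotProduct_add, lblInd_dotProduct_lblInd_eq _ h1 (by omega),
      lblInd_dotProduct_lblInd_eq _ (by omega) h3, if_neg (by omega), if_neg (by omega)]
    rfl

end ChainString

open ChainString

def IsChainString (N : ℕ) (v : PauliVec (Fin N)) : Prop :=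
  ∃ σ : ChainString, σ.WF N ∧ σ.pauliVec N = v

theorem IsChainString.dotProduct_eq_zero {v : PauliVec (Fin N)} (hv : IsChainString N v) :
    v.2 ⬝ᵥ v.1 = 0 := by
  obtain ⟨σ, hσ, rfl⟩ := hv
  exact dotProduct_pauliVec_eq_zero hσ

theorem ChainString.eq_g_of_symp_pauliVec_z_self_eq_one {m : ℕ} (hm1 : 1 ≤ m) (hmN : m ≤ N)
    {σ : ChainString} (h : symp ((z m m).pauliVec N) (σ.pauliVec N) = 1) :
    ∃ p q, σ = g p q ∧ (m = p ∨ m = q) := by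
  have hw : (z m m).pauliVec N = (0, lblInd N (· = m)) := by
    rw [pauliVec]
    congr 1
    exact lblInd_congr fun l _ _ => by omega
  rw [hw, symp, dotProduct_zero, add_zero, dotProduct_comm] at h
  cases σ with
  | z p q =>
    simp only [pauliVec, zero_dotProduct] at h
    exact absurd h (by decide)
  | g p q =>
    simp only [pauliVec] at h
    rw [lblInd_dotProduct_lblInd_eq _ hm1 hmN] at h
    split_ifs at h with hpq
    · exact ⟨p, q, rfl, hpq⟩
    · exact absurd h (by decide)

theorem IsChainString.add_of_symp_pauliVec_z_self_eq_one {m : ℕ} (hm1 : 1 ≤ m) (hmN : m ≤ N)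
    {v v' : PauliVec (Fin N)} (hv : IsChainString N v) (hv' : IsChainString N v') (hne : v ≠ v')
    (h : symp ((z m m).pauliVec N) v = 1) (h' : symp ((z m m).pauliVec N) v' = 1) :
    IsChainString N (v + v') := by
  obtain ⟨σ, hσ, rfl⟩ := hv
  obtain ⟨σ', hσ', rfl⟩ := hv'
  obtain ⟨p, q, rfl, hm⟩ := eq_g_of_symp_pauliVec_z_self_eq_one hm1 hmN h
  obtain ⟨p', q', rfl, hm'⟩ := eq_g_of_symp_pauliVec_z_self_eq_one hm1 hmN h'
  obtain ⟨h1, h2, h3, h4⟩ := hσ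
  obtain ⟨h1', h2', h3', h4'⟩ := hσ'
  have hpq : p + q ≠ p' + q' := by
    intro hsum
    obtain ⟨rfl, rfl⟩ : p = p' ∧ q = q' := by omega
    exact hne rfl
  -- `p + q - m` and `p' + q' - m` are the ends of the two strings other than `m`
  rcases hm with hm | hm <;> rcases hm' with hm' | hm' <;>
  · refine ⟨g (min (p + q - m) (p' + q' - m)) (max (p + q - m) (p' + q' - m)),
      by simp only [WF]; omega, ?_⟩
    simp only [pauliVec, Prod.mk_add_mk]
    congr 1 <;> exact (lblInd_add_lblInd fun l _ _ => by omega).symm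

theorem ChainString.eq_z_of_symp_pauliVec_g_eq_one {m : ℕ} (hm : 2 ≤ m) (hmN : m + 1 ≤ N)
    {σ : ChainString} (hσ : σ.WF N) (h : symp ((g (m - 1) (m + 1)).pauliVec N) (σ.pauliVec N) = 1) :
    ∃ p q, σ = z p q ∧ (q = m - 1 ∨ p = m + 1) := by
  have hw : (g (m - 1) (m + 1)).pauliVec N =
      (lblInd N (· = m - 1) + lblInd N (· = m + 1), lblInd N (· = m)) := by
    rw [pauliVec, lblInd_or (by omega)]
    congr 1
    exact lblInd_congr fun l _ _ => by omega
  rw [hw, symp, dotProduct_add, dotProduct_comm] at h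
  cases σ with
  | z p q =>
    simp only [pauliVec, zero_dotProduct, zero_add] at h
    rw [lblInd_dotProduct_lblInd_eq _ (by omega) (by omega),
      lblInd_dotProduct_lblInd_eq _ (by omega) hmN] at h
    obtain ⟨h1, h2, h3, h4⟩ := hσ
    refine ⟨p, q, rfl, ?_⟩
    split_ifs at h <;> omega
  | g p q =>
    simp only [pauliVec] at h
    rw [lblInd_dotProduct_lblInd_eq _ (by omega) (by omega),
      lblInd_dotProduct_lblInd_eq _ (by omega) (by omega),
      lblInd_dotProduct_lblInd_eq _ (by omega) hmN] at h
    obtain ⟨h1, h2, h3, h4⟩ := hσ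
    split_ifs at h <;> omega

theorem IsChainString.add_of_symp_pauliVec_g_eq_one {m : ℕ} (hm : 2 ≤ m) (hmN : m + 1 ≤ N)
    {v v' : PauliVec (Fin N)} (hv : IsChainString N v) (hv' : IsChainString N v') (hne : v ≠ v')
    (h : symp ((g (m - 1) (m + 1)).pauliVec N) v = 1)
    (h' : symp ((g (m - 1) (m + 1)).pauliVec N) v' = 1) :
    IsChainString N (v + v') := by
  obtain ⟨σ, hσ, rfl⟩ := hv
  obtain ⟨σ', hσ', rfl⟩ := hv'
  obtain ⟨p, q, rfl, hpq⟩ := eq_z_of_symp_pauliVec_g_eq_one hm hmN hσ h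
  obtain ⟨p', q', rfl, hpq'⟩ := eq_z_of_symp_pauliVec_g_eq_one hm hmN hσ' h'
  obtain ⟨h1, h2, h3, h4⟩ := hσ
  obtain ⟨h1', h2', h3', h4'⟩ := hσ'
  have hne' : ¬(p = p' ∧ q = q') := by
    rintro ⟨rfl, rfl⟩
    exact hne rfl
  have key : ∀ r r', (z r r').WF N → (∀ l, (r ≤ l ∧ l ≤ r' ∧ l % 2 = r % 2) ↔
      ((p ≤ l ∧ l ≤ q ∧ l % 2 = p % 2) ↔ ¬(p' ≤ l ∧ l ≤ q' ∧ l % 2 = p' % 2))) →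
      IsChainString N ((z p q).pauliVec N + (z p' q').pauliVec N) := fun r r' hr hl =>
    ⟨z r r', hr, Prod.ext (by simp [pauliVec]) (lblInd_add_lblInd fun l _ _ => hl l).symm⟩
  rcases hpq with hpq | hpq <;> rcases hpq' with hpq' | hpq'
  · exact key (min p p') (max p p' - 2) (by simp only [WF]; omega) fun l => by omega
  · exact key p q' (by simp only [WF]; omega) fun l => by omega
  · exact key p' q (by simp only [WF]; omega) fun l => by omega
  · exact key (min q q' + 2) (max q q') (by simp only [WF]; omega) fun l => by omega

end Chain

section Assembly

open ChainString

variable {N : ℕ}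

def IsStringGenerated (N : ℕ) (G : Submonoid (Op (Fin N))) : Prop :=
  ∃ F : PauliGens (Fin N) (IsChainString N), G = Submonoid.closure (range F.op)

theorem isStringGenerated_closure_range_PZ :
    IsStringGenerated N (Submonoid.closure (range PZ)) := by
  refine ⟨⟨fun _ => 1, fun t => (z (lbl t) (lbl t)).pauliVec N, fun _ => Or.inl rfl,
    fun t => ⟨z (lbl t) (lbl t), ⟨one_le_lbl t, le_rfl, lbl_le t, rfl⟩, rfl⟩, fun t u => ?_, ?_⟩,
    ?_⟩
  · rw [smul_pauli_commute_iff one_ne_zero one_ne_zero, pauliVec_z_lbl, pauliVec_z_lbl]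
    simp [symp]
  · intro T hT
    refine Finset.eq_empty_of_forall_notMem fun t ht => ?_
    have := congrFun (congrArg Prod.snd hT) t
    simp [pauliVec_z_lbl, Prod.snd_sum, Finset.sum_apply, Pi.single_apply, ht] at this
  · congr
    funext t
    simp [PauliGens.op, pauliVec_z_lbl, PZ_eq_pauli]

theorem IsStringGenerated.meas_PZ {G : Submonoid (Op (Fin N))} (hG : IsStringGenerated N G)
    (i : Fin N) {ε : ℂ} (hε : ε = 1 ∨ ε = -1) : IsStringGenerated N (Meas G (PZ i) ε) := by
  obtain ⟨F, rfl⟩ := hG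
  rw [PZ_eq_pauli, ← pauliVec_z_lbl]
  exact F.exists_meas_eq (fun _ hv => hv.dotProduct_eq_zero)
    ⟨z (lbl i) (lbl i), ⟨one_le_lbl i, le_rfl, lbl_le i, rfl⟩, rfl⟩
    (fun _ _ hv hv' => hv.add_of_symp_pauliVec_z_self_eq_one (one_le_lbl i) (lbl_le i) hv') hε

theorem IsStringGenerated.meas_GStr {G : Submonoid (Op (Fin N))} (hG : IsStringGenerated N G)
    {m : ℕ} (hm : 2 ≤ m) (hmN : m ≤ N - 1) {ε : ℂ} (hε : ε = 1 ∨ ε = -1) :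
    IsStringGenerated N (Meas G (GStr N (m - 1) (m + 1)) ε) := by
  obtain ⟨F, rfl⟩ := hG
  rw [← pauli_pauliVec_g]
  exact F.exists_meas_eq (fun _ hv => hv.dotProduct_eq_zero)
    ⟨g (m - 1) (m + 1), ⟨by omega, by omega, by omega, by omega⟩, rfl⟩
    (fun _ _ hv hv' => hv.add_of_symp_pauliVec_g_eq_one hm (by omega) hv') hε

theorem IsStringGenerated.foldl_meas (L : List (Op (Fin N) × ℂ))
    (hL : ∀ p ∈ L,
      ((∃ i : Fin N, p.1 = PZ i) ∨
        (∃ i : ℕ, 2 ≤ i ∧ i ≤ N - 1 ∧ p.1 = GStr N (i - 1) (i + 1))) ∧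
      (p.2 = 1 ∨ p.2 = -1))
    {G : Submonoid (Op (Fin N))} (hG : IsStringGenerated N G) :
    IsStringGenerated N (L.foldl (fun G p => Meas G p.1 p.2) G) := by
  induction L generalizing G with
  | nil => exact hG
  | cons p L ih =>
    obtain ⟨hM, hε⟩ := hL p List.mem_cons_self
    refine ih (fun q hq => hL q (List.mem_cons_of_mem p hq)) ?_
    change IsStringGenerated N (Meas G p.1 p.2)
    rcases hM with ⟨i, hM⟩ | ⟨i, hi, hiN, hM⟩ <;> rw [hM]
    · exact hG.meas_PZ i hε
    · exact hG.meas_GStr hi hiN hε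

end Assembly

theorem stabilizers_remain_string_operators_general {N : ℕ}
    (L : List (Op (Fin N) × ℂ))
    (hL : ∀ p ∈ L,
      ((∃ i : Fin N, p.1 = PZ i) ∨
        (∃ i : ℕ, 2 ≤ i ∧ i ≤ N - 1 ∧ p.1 = GStr N (i - 1) (i + 1))) ∧
      (p.2 = 1 ∨ p.2 = -1)) :
    ∀ G : Submonoid (Op (Fin N)),
      G = L.foldl (fun G p => Meas G p.1 p.2)
        (Submonoid.closure (Set.range (PZ : Fin N → Op (Fin N)))) →
      ∃ s : Fin N → Op (Fin N),
        Submonoid.closure (Set.range s) = G ∧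
        ∀ t : Fin N, ∃ ε : ℂ, (ε = 1 ∨ ε = -1) ∧
          ((∃ p q : ℕ, 1 ≤ p ∧ p ≤ q ∧ q ≤ N ∧ p % 2 = q % 2 ∧ s t = ε • ZStr N p q) ∨
            (∃ p q : ℕ, 1 ≤ p ∧ p < q ∧ q ≤ N ∧ p % 2 = q % 2 ∧ s t = ε • GStr N p q)) := by
  rintro G rfl
  obtain ⟨F, hF⟩ := isStringGenerated_closure_range_PZ.foldl_meas L hL
  refine ⟨F.op, hF.symm, fun t => ⟨F.sign t, F.sign_eq t, ?_⟩⟩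
  obtain ⟨σ, hσ, hv⟩ := F.prop t
  rw [PauliGens.op, ← hv]
  cases σ with
  | z p q =>
    obtain ⟨h1, h2, h3, h4⟩ := hσ
    exact Or.inl ⟨p, q, h1, h2, h3, h4, by rw [ChainString.pauli_pauliVec_z]⟩
  | g p q =>
    obtain ⟨h1, h2, h3, h4⟩ := hσ
    exact Or.inr ⟨p, q, h1, h2, h3, h4, by rw [ChainString.pauli_pauliVec_g]⟩

/-- (`N` even.)  Let `G₀ = ⟨Z 1, …, Z N⟩` and let `G` be obtained from
`G₀` by finitely many measurement-updates `G ↦ Meas(G, M, ε)`, where each measured `M` is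
either a `Z i` (`1 ≤ i ≤ N`) or a cluster stabilizer `g i = X(i−1) Z i X(i+1)`
(`2 ≤ i ≤ N−1`) and each `ε ∈ {1, −1}`.  Then `G` is generated by `N` elements, each of
which is, up to a sign `±1`, either a string `Z_{p,q} = Z p · Z (p+2) ⋯ Z q` or a string
`g_{p,q} = X p (Z (p+1) Z (p+3) ⋯ Z (q−1)) X q` with `p ≤ q` (resp. `p < q`) of equal
parity. -/
theorem stabilizers_remain_string_operators {N : ℕ} (hN : Even N)
    (L : List (Op (Fin N) × ℂ))
    (hL : ∀ p ∈ L,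
      ((∃ i : Fin N, p.1 = PZ i) ∨
        (∃ i : ℕ, 2 ≤ i ∧ i ≤ N - 1 ∧ p.1 = GStr N (i - 1) (i + 1))) ∧
      (p.2 = 1 ∨ p.2 = -1)) :
    ∀ G : Submonoid (Op (Fin N)),
      G = L.foldl (fun G p => Meas G p.1 p.2)
        (Submonoid.closure (Set.range (PZ : Fin N → Op (Fin N)))) →
      ∃ s : Fin N → Op (Fin N),
        Submonoid.closure (Set.range s) = G ∧
        ∀ t : Fin N, ∃ ε : ℂ, (ε = 1 ∨ ε = -1) ∧
          ((∃ p q : ℕ, 1 ≤ p ∧ p ≤ q ∧ q ≤ N ∧ p % 2 = q % 2 ∧ s t = ε • ZStr N p q) ∨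
            (∃ p q : ℕ, 1 ≤ p ∧ p < q ∧ q ≤ N ∧ p % 2 = q % 2 ∧ s t = ε • GStr N p q)) :=
  stabilizers_remain_string_operators_general L hL

end QStab
end
end
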